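/- Let μ be a Borel measure on a compact set Ω ⊂ ℝⁿ×ℝ with nonempty interior (so that M_t(μ) is positive definite for all t), and let φ be the marginal of μ on ℝⁿ. Then for every fixed x ∈ ℝⁿ and t ∈ ℕ, the function y ↦ p_t(y; x) := Λ^μ_t(x,y)^{-1} / Λ^φ_t(x)^{-1} = Λ^φ_t(x)/Λ^μ_t(x,y) is a univariate polynomial in y of degree at most 2t, is a sum of squares of univariate polynomials, and satisfies p_t(y; x) ≥ 1 for all y ∈ ℝ. -/

import Mathlib

open MeasureTheory Matrix

noncomputable section

/-- Multi-indices `α ∈ ℕⁿ` with `|α| ≤ t`, encoded with entries in `Fin (t+1)`. -/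
def MIdx (n t : ℕ) : Type :=
  {α : Fin n → Fin (t + 1) // (∑ i, ((α i : ℕ))) ≤ t}

instance (n t : ℕ) : Fintype (MIdx n t) := by unfold MIdx; infer_instance

instance (n t : ℕ) : DecidableEq (MIdx n t) := by unfold MIdx; infer_instance

/-- The monomial `x^α`. -/
def mon {n t : ℕ} (x : Fin n → ℝ) (α : MIdx n t) : ℝ :=
  ∏ i, x i ^ ((α.1 i : ℕ))

/-- Joint multi-indices `(α, k) ∈ ℕⁿ × ℕ` with `|α| + k ≤ t`, indexing the monomials
`x^α y^k` of degree at most `t` on `ℝⁿ × ℝ`. -/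
def XYIdx (n t : ℕ) : Type :=
  {ak : (Fin n → Fin (t + 1)) × Fin (t + 1) //
    (∑ i, ((ak.1 i : ℕ))) + (ak.2 : ℕ) ≤ t}

instance (n t : ℕ) : Fintype (XYIdx n t) := by unfold XYIdx; infer_instance

instance (n t : ℕ) : DecidableEq (XYIdx n t) := by unfold XYIdx; infer_instance

/-- The monomial `x^α y^k`. -/
def monXY {n t : ℕ} (x : Fin n → ℝ) (y : ℝ) (γ : XYIdx n t) : ℝ :=
  (∏ i, x i ^ ((γ.1.1 i : ℕ))) * y ^ ((γ.1.2 : ℕ))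

/-- The moment matrix `M_t(μ)` of a measure `μ` on `ℝⁿ × ℝ`. -/
def momMatXY (n t : ℕ) (μ : Measure ((Fin n → ℝ) × ℝ)) :
    Matrix (XYIdx n t) (XYIdx n t) ℝ :=
  fun γ δ => ∫ z, monXY z.1 z.2 γ * monXY z.1 z.2 δ ∂μ

/-- The moment matrix `M_t(φ)` of a measure `φ` on `ℝⁿ`. -/
def momMatX (n t : ℕ) (φ : Measure (Fin n → ℝ)) : Matrix (MIdx n t) (MIdx n t) ℝ :=
  fun α β => ∫ x, mon x α * mon x β ∂φ

/-- Evaluation at `y` of the univariate polynomial with coefficient vector `c`. -/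
def evalU {m : ℕ} (c : Fin (m + 1) → ℝ) (y : ℝ) : ℝ :=
  ∑ i, c i * y ^ (i : ℕ)

/-! Restricting to the monomials free of `y` identifies `M_t(φ)` with a principal submatrix of
`M_t(μ)`. Cauchy–Schwarz in the inner product given by `M_t(μ)` then bounds the Christoffel
function of the submatrix by that of the full matrix, which is `p_t ≥ 1`. Writing
`M_t(μ)⁻¹ = BᵀB`, the numerator is `∑ⱼ ((B v_t(x,y))ⱼ)²`, and every `(B v_t(x,y))ⱼ` is a
polynomial in `y` of degree at most `t`. -/

open Polynomial

namespace Matrix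

variable {I J : Type*} [Fintype I] [Fintype J]

open scoped MatrixOrder in
lemma PosSemidef.exists_eq_transpose_mul_self [DecidableEq I] {P : Matrix I I ℝ}
    (hP : P.PosSemidef) : ∃ B : Matrix I I ℝ, P = Bᵀ * B := by
  obtain ⟨B, hB⟩ := CStarAlgebra.nonneg_iff_eq_star_mul_self.mp hP.nonneg
  exact ⟨B, by rw [hB, star_eq_conjTranspose, conjTranspose_eq_transpose_of_trivial]⟩

lemma dotProduct_transpose_mul_self_mulVec (B : Matrix J I ℝ) (a b : I → ℝ) :
    a ⬝ᵥ (Bᵀ * B) *ᵥ b = (B *ᵥ a) ⬝ᵥ (B *ᵥ b) := by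
  rw [← mulVec_mulVec, dotProduct_mulVec, vecMul_transpose]

lemma PosSemidef.dotProduct_mulVec_sq_le [DecidableEq I] {P : Matrix I I ℝ}
    (hP : P.PosSemidef) (a b : I → ℝ) :
    (a ⬝ᵥ P *ᵥ b) ^ 2 ≤ (a ⬝ᵥ P *ᵥ a) * (b ⬝ᵥ P *ᵥ b) := by
  obtain ⟨B, rfl⟩ := hP.exists_eq_transpose_mul_self
  simp only [dotProduct_transpose_mul_self_mulVec]
  simpa only [dotProduct, sq] using Finset.sum_mul_sq_le_sq_mul_sq Finset.univ (B *ᵥ a) (B *ᵥ b)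

lemma PosDef.mulVec_inv_mulVec [DecidableEq I] {M : Matrix I I ℝ} (hM : M.PosDef)
    (u : I → ℝ) : M *ᵥ M⁻¹ *ᵥ u = u := by
  rw [mulVec_mulVec, mul_nonsing_inv _ ((isUnit_iff_isUnit_det M).mp hM.isUnit), one_mulVec]

lemma PosDef.sq_dotProduct_le [DecidableEq I] {M : Matrix I I ℝ} (hM : M.PosDef)
    (w u : I → ℝ) : (w ⬝ᵥ u) ^ 2 ≤ (w ⬝ᵥ M *ᵥ w) * (u ⬝ᵥ M⁻¹ *ᵥ u) := by
  have := hM.posSemidef.dotProduct_mulVec_sq_le w (M⁻¹ *ᵥ u)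
  rwa [hM.mulVec_inv_mulVec, dotProduct_comm (M⁻¹ *ᵥ u)] at this

lemma sum_single_dotProduct [DecidableEq J] (ι : I → J) (a : I → ℝ) (v : J → ℝ) :
    (∑ i, Pi.single (ι i) (a i)) ⬝ᵥ v = a ⬝ᵥ (v ∘ ι) := by
  simp only [sum_dotProduct, single_dotProduct]
  rfl

/-- Monotonicity of Christoffel functions under passing to a principal submatrix. -/
theorem PosDef.dotProduct_inv_submatrix_mulVec_le [DecidableEq I] [DecidableEq J]
    {M : Matrix J J ℝ} (hM : M.PosDef) {ι : I → J} (hι : Function.Injective ι) (u : J → ℝ) :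
    (u ∘ ι) ⬝ᵥ (M.submatrix ι ι)⁻¹ *ᵥ (u ∘ ι) ≤ u ⬝ᵥ M⁻¹ *ᵥ u := by
  set N := M.submatrix ι ι
  have hN : N.PosDef := hM.submatrix hι
  set a := N⁻¹ *ᵥ (u ∘ ι)
  set d := (u ∘ ι) ⬝ᵥ a
  -- `a` extended by zero: the test vector for which Cauchy–Schwarz below is sharp.
  set w : J → ℝ := ∑ i : I, Pi.single (ι i) (a i)
  have hwu : w ⬝ᵥ u = d := by rw [sum_single_dotProduct, dotProduct_comm]
  have hMw : (M *ᵥ w) ∘ ι = u ∘ ι := by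
    have : (M *ᵥ w) ∘ ι = N *ᵥ a := by
      ext i
      simp only [Function.comp_apply, mulVec, dotProduct_comm (M (ι i)), w,
        sum_single_dotProduct]
      exact dotProduct_comm _ _
    rw [this, hN.mulVec_inv_mulVec]
  have hwMw : w ⬝ᵥ M *ᵥ w = d := by
    rw [sum_single_dotProduct, hMw, dotProduct_comm]
  have hd : 0 ≤ d := by simpa using hN.inv.posSemidef.dotProduct_mulVec_nonneg (u ∘ ι)
  have hu : 0 ≤ u ⬝ᵥ M⁻¹ *ᵥ u := by simpa using hM.inv.posSemidef.dotProduct_mulVec_nonneg u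
  have := hM.sq_dotProduct_le w u
  rw [hwu, hwMw] at this
  nlinarith

end Matrix

lemma evalU_coeff (p : ℝ[X]) {m : ℕ} (hp : p.natDegree ≤ m) (y : ℝ) :
    evalU (fun i : Fin (m + 1) => p.coeff i) y = p.eval y := by
  rw [evalU, eval_eq_sum_range' (Nat.lt_succ_of_le hp)]
  exact Fin.sum_univ_eq_sum_range (fun i => p.coeff i * y ^ i) (m + 1)

lemma Matrix.PosSemidef.exists_sum_sq_eval {I : Type*} [Fintype I] [DecidableEq I]
    {P : Matrix I I ℝ} (hP : P.PosSemidef) {m : ℕ} (v : I → ℝ[X])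
    (hv : ∀ i, (v i).natDegree ≤ m) :
    ∃ q : I → ℝ[X], (∀ j, (q j).natDegree ≤ m) ∧
      ∀ y, (fun i => (v i).eval y) ⬝ᵥ P *ᵥ (fun i => (v i).eval y) = ∑ j, (q j).eval y ^ 2 := by
  obtain ⟨B, rfl⟩ := hP.exists_eq_transpose_mul_self
  refine ⟨fun j => ∑ i, C (B j i) * v i, fun j => ?_, fun y => ?_⟩
  · exact natDegree_sum_le_of_forall_le _ _ fun i _ =>
      (natDegree_C_mul_le _ _).trans (hv i)
  · rw [Matrix.dotProduct_transpose_mul_self_mulVec]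
    simp [dotProduct, mulVec, eval_finsetSum, sq]

lemma exists_evalU_eq_sum_sq {I : Type*} [Fintype I] {t : ℕ} (q : I → ℝ[X])
    (hq : ∀ j, (q j).natDegree ≤ t) :
    ∃ c : Fin (2 * t + 1) → ℝ, (∀ y, evalU c y = ∑ j, (q j).eval y ^ 2) ∧
      ∃ (k : ℕ) (r : Fin k → Fin (t + 1) → ℝ), ∀ y, evalU c y = ∑ j, evalU (r j) y ^ 2 := by
  have hdeg : (∑ j, q j ^ 2).natDegree ≤ 2 * t :=
    natDegree_sum_le_of_forall_le _ _ fun j _ =>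
      natDegree_pow_le.trans (by have := hq j; omega)
  have hc : ∀ y, evalU (fun i : Fin (2 * t + 1) => (∑ j, q j ^ 2).coeff i) y
      = ∑ j, (q j).eval y ^ 2 := fun y => by
    rw [evalU_coeff _ hdeg, eval_finsetSum]
    simp only [eval_pow]
  refine ⟨_, hc, Fintype.card I, fun k i => (q ((Fintype.equivFin I).symm k)).coeff i,
    fun y => ?_⟩
  rw [hc]
  simp only [evalU_coeff _ (hq _)]
  exact Fintype.sum_equiv (Fintype.equivFin I) _ _ fun j => by simp

section Moments

variable {n t : ℕ}

def MIdx.toXYIdx (α : MIdx n t) : XYIdx n t :=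
  ⟨(α.1, 0), by simpa using α.2⟩

lemma MIdx.toXYIdx_injective : Function.Injective (MIdx.toXYIdx : MIdx n t → XYIdx n t) :=
  fun _ _ h => Subtype.ext (congrArg Prod.fst (congrArg Subtype.val h))

@[simp]
lemma monXY_toXYIdx (x : Fin n → ℝ) (y : ℝ) (α : MIdx n t) : monXY x y α.toXYIdx = mon x α := by
  simp [monXY, mon, MIdx.toXYIdx]

lemma continuous_mon (α : MIdx n t) : Continuous fun x : Fin n → ℝ => mon x α :=
  continuous_finsetProd _ fun i _ => (continuous_apply i).pow _

lemma momMatX_map_fst (μ : Measure ((Fin n → ℝ) × ℝ)) :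
    momMatX n t (μ.map Prod.fst) =
      (momMatXY n t μ).submatrix MIdx.toXYIdx MIdx.toXYIdx := by
  ext α β
  rw [momMatX, submatrix_apply, momMatXY, integral_map (f := fun x => mon x α * mon x β)
    measurable_fst.aemeasurable
    ((continuous_mon α).mul (continuous_mon β)).aestronglyMeasurable]
  simp only [monXY_toXYIdx]

lemma mon_ne_zero (x : Fin n → ℝ) : (mon x : MIdx n t → ℝ) ≠ 0 := by
  have h0 : mon x (⟨0, by simp⟩ : MIdx n t) = 1 := by simp [mon]
  exact fun h => one_ne_zero (h0.symm.trans (congrFun h _))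

def monXYPoly (x : Fin n → ℝ) (γ : XYIdx n t) : ℝ[X] :=
  C (∏ i, x i ^ (γ.1.1 i : ℕ)) * X ^ (γ.1.2 : ℕ)

lemma eval_monXYPoly (x : Fin n → ℝ) (y : ℝ) (γ : XYIdx n t) :
    (monXYPoly x γ).eval y = monXY x y γ := by
  simp only [monXYPoly, monXY, eval_mul, eval_C, eval_pow, eval_X]

lemma natDegree_monXYPoly_le (x : Fin n → ℝ) (γ : XYIdx n t) :
    (monXYPoly x γ).natDegree ≤ t :=
  (natDegree_C_mul_X_pow_le _ _).trans (Nat.lt_succ_iff.mp γ.1.2.isLt)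

end Moments

theorem stmt10_general (n : ℕ)
    (μ : Measure ((Fin n → ℝ) × ℝ))
    (hPD : ∀ s : ℕ, (momMatXY n s μ).PosDef)
    (x : Fin n → ℝ) (t : ℕ) :
    ∃ c : Fin (2 * t + 1) → ℝ,
      -- `p_t(·; x)` is a polynomial in `y` of degree at most `2t`
      (∀ y : ℝ,
        (monXY x y ⬝ᵥ (momMatXY n t μ)⁻¹.mulVec (monXY x y)) /
          (mon x ⬝ᵥ (momMatX n t (μ.map Prod.fst))⁻¹.mulVec (mon x))
        = evalU c y) ∧
      -- it is a sum of squares of univariate polynomials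
      (∃ (k : ℕ) (q : Fin k → Fin (t + 1) → ℝ),
        ∀ y : ℝ, evalU c y = ∑ j, (evalU (q j) y) ^ 2) ∧
      -- and it is bounded below by 1
      (∀ y : ℝ, 1 ≤ evalU c y) := by
  have hM := hPD t
  set d := mon x ⬝ᵥ (momMatX n t (μ.map Prod.fst))⁻¹ *ᵥ mon x
  have hd : 0 < d := by
    simpa only [d, momMatX_map_fst, star_trivial] using
      (hM.submatrix MIdx.toXYIdx_injective).inv.dotProduct_mulVec_pos (mon_ne_zero x)
  obtain ⟨q, hq, hqM⟩ := (hM.inv.posSemidef.smul (inv_nonneg.2 hd.le)).exists_sum_sq_eval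
    (monXYPoly x) (natDegree_monXYPoly_le x)
  obtain ⟨c, hc, hsos⟩ := exists_evalU_eq_sum_sq q hq
  have hratio : ∀ y, (monXY x y ⬝ᵥ (momMatXY n t μ)⁻¹ *ᵥ monXY x y) / d = evalU c y := by
    intro y
    rw [hc, ← hqM]
    simp only [eval_monXYPoly, smul_mulVec, dotProduct_smul, smul_eq_mul, div_eq_inv_mul]
  refine ⟨c, hratio, hsos, fun y => ?_⟩
  rw [← hratio, one_le_div hd]
  simpa only [d, momMatX_map_fst, Function.comp_def, monXY_toXYIdx] using
    hM.dotProduct_inv_submatrix_mulVec_le MIdx.toXYIdx_injective (monXY x y)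

/-- Let `μ` be a Borel measure on a compact set `Ω ⊆ ℝⁿ × ℝ` with nonempty interior (so
that `M_t(μ)` is positive definite for all `t`) and `φ` its marginal on `ℝⁿ`.  For every
fixed `x ∈ ℝⁿ` and `t ∈ ℕ`, the function
`y ↦ p_t(y; x) := Λ^μ_t(x,y)⁻¹ / Λ^φ_t(x)⁻¹` is a univariate polynomial in `y` of degree
at most `2t`, is a sum of squares of univariate polynomials, and satisfies
`p_t(y; x) ≥ 1` for all `y ∈ ℝ`. -/
theorem stmt10 (n : ℕ) (Ω : Set ((Fin n → ℝ) × ℝ))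
    (hΩc : IsCompact Ω) (hΩi : (interior Ω).Nonempty)
    (μ : Measure ((Fin n → ℝ) × ℝ)) [IsFiniteMeasure μ] (hsupp : μ Ωᶜ = 0)
    (hPD : ∀ s : ℕ, (momMatXY n s μ).PosDef)
    (x : Fin n → ℝ) (t : ℕ) :
    ∃ c : Fin (2 * t + 1) → ℝ,
      -- `p_t(·; x)` is a polynomial in `y` of degree at most `2t`
      (∀ y : ℝ,
        (monXY x y ⬝ᵥ (momMatXY n t μ)⁻¹.mulVec (monXY x y)) /
          (mon x ⬝ᵥ (momMatX n t (μ.map Prod.fst))⁻¹.mulVec (mon x))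
        = evalU c y) ∧
      -- it is a sum of squares of univariate polynomials
      (∃ (k : ℕ) (q : Fin k → Fin (t + 1) → ℝ),
        ∀ y : ℝ, evalU c y = ∑ j, (evalU (q j) y) ^ 2) ∧
      -- and it is bounded below by 1
      (∀ y : ℝ, 1 ≤ evalU c y) :=
  stmt10_general n μ hPD x t
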